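/- arXiv:math/0407107 — 6 statements merged into one kernel-verified Lean document; each statement's English description precedes it below -/
import Mathlib

section
/- Let A be a real symmetric n×n matrix with least eigenvalue λ_n. Then λ_n equals the minimum over all vectors v_1,...,v_n ∈ ℝ^n (not all zero) of (Σ_{i,j} A_{i,j}⟨v_i,v_j⟩) / (Σ_i ‖v_i‖²). -/
/-!
If `μ` is the least eigenvalue of `A`, the spectral theorem makes `A - μ • 1` positive
semidefinite, so `μ ‖x‖² ≤ ⟨x, A x⟩` for every `x`. The Gram form `Σ A i j ⟨v i, v j⟩` is the sum
of the quadratic forms `⟨x, A x⟩` over the coordinate slices `x = (v i k)_i`, which gives the lower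
bound. It is attained by the rank-one family `v i = u i • u`, for `u` a unit eigenvector of `μ`.
-/

open Finset Matrix
open scoped ComplexOrder

theorem sum_sum_sq_pos_iff_ne_zero {ι κ : Type*} [Fintype ι] [Fintype κ] {v : ι → κ → ℝ} :
    0 < ∑ i, ∑ k, v i k ^ 2 ↔ v ≠ 0 := by
  simp only [sum_pos_iff_of_nonneg fun i _ ↦ sum_nonneg fun k _ ↦ sq_nonneg (v i k),
    sum_pos_iff_of_nonneg fun k _ ↦ sq_nonneg (v _ k), mem_univ, true_and, sq_pos_iff, ne_eq,
    funext_iff, Pi.zero_apply, not_forall]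

namespace Matrix

section Gram

variable {R ι κ : Type*} [CommSemiring R] [Fintype ι] [Fintype κ]

theorem sum_mul_dotProduct_eq_sum_dotProduct_mulVec (A : Matrix ι ι R) (v : ι → κ → R) :
    ∑ i, ∑ j, A i j * (v i ⬝ᵥ v j) = ∑ k, (fun i ↦ v i k) ⬝ᵥ A *ᵥ fun i ↦ v i k := by
  simp only [dotProduct, mulVec, mul_sum]
  rw [sum_comm_cycle]
  exact sum_congr rfl fun k _ ↦ sum_congr rfl fun i _ ↦ sum_congr rfl fun j _ ↦ by ring

theorem sum_mul_smul_dotProduct_smul (A : Matrix ι ι R) (u : ι → R) (w : κ → R) :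
    ∑ i, ∑ j, A i j * ((u i • w) ⬝ᵥ (u j • w)) = (u ⬝ᵥ A *ᵥ u) * (w ⬝ᵥ w) := by
  simp only [dotProduct, mulVec, Pi.smul_apply, smul_eq_mul, mul_sum, sum_mul]
  rw [sum_comm_cycle]
  exact sum_congr rfl fun k _ ↦ sum_congr rfl fun i _ ↦ sum_congr rfl fun j _ ↦ by ring

theorem sum_sum_smul_apply_sq (u : ι → R) (w : κ → R) :
    ∑ i, ∑ k, (u i • w) k ^ 2 = (u ⬝ᵥ u) * (w ⬝ᵥ w) := by
  simp only [dotProduct, Pi.smul_apply, smul_eq_mul, sum_mul, mul_sum]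
  rw [sum_comm]
  exact sum_congr rfl fun i _ ↦ sum_congr rfl fun k _ ↦ by ring

end Gram

namespace IsHermitian

variable {ι : Type*} [Fintype ι] [DecidableEq ι]

theorem posSemidef_sub_smul_one {𝕜 : Type*} [RCLike 𝕜] {A : Matrix ι ι 𝕜} (hA : A.IsHermitian)
    {μ : ℝ} (hμ : ∀ i, μ ≤ hA.eigenvalues i) : (A - (μ : 𝕜) • 1).PosSemidef := by
  have hshift : diagonal (fun i ↦ ((hA.eigenvalues i - μ : ℝ) : 𝕜)) =
      diagonal (RCLike.ofReal ∘ hA.eigenvalues) - (μ : 𝕜) • 1 := by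
    ext i j
    rcases eq_or_ne i j with rfl | hij <;> simp [*, Algebra.algebraMap_eq_smul_one, sub_smul]
  have hdecomp : A - (μ : 𝕜) • 1 = hA.eigenvectorUnitary *
      diagonal (fun i ↦ ((hA.eigenvalues i - μ : ℝ) : 𝕜)) * star hA.eigenvectorUnitary := by
    conv_lhs => rw [hA.spectral_theorem, Unitary.conjStarAlgAut_apply]
    simp only [hshift, mul_sub, sub_mul, mul_smul_comm, smul_mul_assoc, mul_one, Unitary.coe_star,
      Unitary.mul_star_self_of_mem hA.eigenvectorUnitary.2]
  rw [hdecomp]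
  refine (posSemidef_diagonal_iff.mpr fun i ↦ ?_).mul_mul_conjTranspose_same _
  exact_mod_cast sub_nonneg.mpr (hμ i)

variable {A : Matrix ι ι ℝ} (hA : A.IsHermitian)
include hA

theorem mul_dotProduct_self_le_dotProduct_mulVec {μ : ℝ} (hμ : ∀ i, μ ≤ hA.eigenvalues i)
    (x : ι → ℝ) : μ * (x ⬝ᵥ x) ≤ x ⬝ᵥ A *ᵥ x := by
  simpa [sub_mulVec, dotProduct_sub, smul_mulVec] using
    (hA.posSemidef_sub_smul_one hμ).dotProduct_mulVec_nonneg x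

theorem mul_sum_sum_sq_le_sum_mul_dotProduct {μ : ℝ} (hμ : ∀ i, μ ≤ hA.eigenvalues i)
    {κ : Type*} [Fintype κ] (v : ι → κ → ℝ) :
    μ * ∑ i, ∑ k, v i k ^ 2 ≤ ∑ i, ∑ j, A i j * (v i ⬝ᵥ v j) := by
  rw [sum_mul_dotProduct_eq_sum_dotProduct_mulVec, sum_comm, mul_sum]
  refine sum_le_sum fun k _ ↦ ?_
  simpa only [dotProduct, sq] using hA.mul_dotProduct_self_le_dotProduct_mulVec hμ fun i ↦ v i k

theorem dotProduct_eigenvectorBasis_self (i : ι) :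
    ⇑(hA.eigenvectorBasis i) ⬝ᵥ ⇑(hA.eigenvectorBasis i) = 1 := by
  have h := real_inner_self_eq_norm_sq (hA.eigenvectorBasis i)
  rw [hA.eigenvectorBasis.orthonormal.1 i, EuclideanSpace.inner_eq_star_dotProduct] at h
  simpa using h

theorem dotProduct_mulVec_eigenvectorBasis (i : ι) :
    ⇑(hA.eigenvectorBasis i) ⬝ᵥ A *ᵥ ⇑(hA.eigenvectorBasis i) = hA.eigenvalues i := by
  simpa using (hA.eigenvalues_eq i).symm

end IsHermitian

end Matrix

open Finset in
theorem least_eigenvalue_eq_min_gram_ratio (n : ℕ) (hn : 0 < n)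
    (A : Matrix (Fin n) (Fin n) ℝ) (hA : A.IsHermitian) :
    IsLeast {r : ℝ | ∃ v : Fin n → (Fin n → ℝ), v ≠ 0 ∧
        r = (∑ i, ∑ j, A i j * ∑ k, v i k * v j k) / (∑ i, ∑ k, (v i k) ^ 2)}
      (⨅ i, hA.eigenvalues i) := by
  have : Nonempty (Fin n) := ⟨⟨0, hn⟩⟩
  obtain ⟨i₀, hi₀⟩ := exists_eq_ciInf_of_finite (f := hA.eigenvalues)
  constructor
  · set u : Fin n → ℝ := ⇑(hA.eigenvectorBasis i₀)
    have hden : ∑ i, ∑ k, (u i • u) k ^ 2 = 1 := by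
      rw [sum_sum_smul_apply_sq, hA.dotProduct_eigenvectorBasis_self, one_mul]
    have hnum : ∑ i, ∑ j, A i j * ((u i • u) ⬝ᵥ (u j • u)) = hA.eigenvalues i₀ := by
      rw [sum_mul_smul_dotProduct_smul, hA.dotProduct_mulVec_eigenvectorBasis,
        hA.dotProduct_eigenvectorBasis_self, mul_one]
    refine ⟨fun i ↦ u i • u, sum_sum_sq_pos_iff_ne_zero.mp (hden ▸ one_pos), ?_⟩
    rw [hden, div_one, ← hi₀]
    exact hnum.symm
  · rintro r ⟨v, hv, rfl⟩
    rw [le_div_iff₀ (sum_sum_sq_pos_iff_ne_zero.mpr hv)]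
    exact hA.mul_sum_sum_sq_le_sum_mul_dotProduct (ciInf_le (Set.finite_range _).bddBelow) v
end

section
/- Hoffman's bound: for a graph G with adjacency matrix A having largest eigenvalue λ_1 and least eigenvalue λ_n, and at least one edge, the chromatic number satisfies χ(G) ≥ 1 − λ_1/λ_n. -/
/-!
If `A v = λ₁ v` and `c` is a proper colouring with `k` colours, let `y_c` be the restriction of `v`
to the colour class `c`. Each class is independent, so `y_cᵀ A y_c = 0`, and the Rayleigh bound
`λₙ ‖x‖² ≤ xᵀ A x` at the test vectors `x = k y_c - v`, summed over the `k` colours, gives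
`k (k - 1) λₙ ‖v‖² ≤ -k λ₁ ‖v‖²`. Since `A ≠ 0` has trace zero, `λₙ < 0`, and dividing yields
`k ≥ 1 - λ₁ / λₙ`.
-/

open Matrix

namespace Matrix.IsHermitian

variable {ι : Type*} [Fintype ι] [DecidableEq ι]

lemma iInf_eigenvalues_mul_dotProduct_self_le [Nonempty ι] {A : Matrix ι ι ℝ}
    (hA : A.IsHermitian) (u : ι → ℝ) :
    (⨅ i, hA.eigenvalues i) * (u ⬝ᵥ u) ≤ u ⬝ᵥ (A *ᵥ u) := by
  set U : Matrix ι ι ℝ := (hA.eigenvectorUnitary : Matrix ι ι ℝ)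
  have hUT : U * Uᵀ = 1 := by
    rw [← conjTranspose_eq_transpose_of_trivial]
    exact mem_unitaryGroup_iff.mp hA.eigenvectorUnitary.2
  set w := Uᵀ *ᵥ u
  have hw : w ⬝ᵥ w = u ⬝ᵥ u := by
    change w ⬝ᵥ (Uᵀ *ᵥ u) = _
    rw [dotProduct_mulVec, vecMul_transpose, mulVec_mulVec, hUT, one_mulVec]
  have hq : u ⬝ᵥ (A *ᵥ u) = ∑ i, hA.eigenvalues i * (w i * w i) := by
    conv_lhs => rw [hA.spectral_theorem, Unitary.conjStarAlgAut_apply]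
    rw [← mulVec_mulVec, ← mulVec_mulVec, dotProduct_mulVec, ← mulVec_transpose,
      show star U = Uᵀ from conjTranspose_eq_transpose_of_trivial U]
    simp only [dotProduct, mulVec_diagonal, Function.comp_apply, RCLike.ofReal_real_eq_id, id]
    exact Finset.sum_congr rfl fun i _ ↦ by ring
  rw [hq, ← hw, dotProduct, Finset.mul_sum]
  gcongr with i
  · exact mul_self_nonneg _
  · exact ciInf_le (Set.finite_range _).bddBelow i

variable {𝕜 : Type*} [RCLike 𝕜] {A : Matrix ι ι 𝕜}

lemma iInf_eigenvalues_neg [Nonempty ι] (hA : A.IsHermitian) (htr : A.trace = 0) (hA0 : A ≠ 0) :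
    ⨅ i, hA.eigenvalues i < 0 := by
  by_contra! h
  have hnonneg : ∀ i, 0 ≤ hA.eigenvalues i := (le_ciInf_iff (Set.finite_range _).bddBelow).mp h
  have hsum : ∑ i, hA.eigenvalues i = 0 := by
    exact_mod_cast (htr ▸ hA.trace_eq_sum_eigenvalues).symm
  refine hA0 (hA.eigenvalues_eq_zero_iff.mp (funext fun i ↦ ?_))
  exact (Finset.sum_eq_zero_iff_of_nonneg fun i _ ↦ hnonneg i).mp hsum i (Finset.mem_univ i)

lemma exists_mulVec_eq_iSup_eigenvalues_smul [Nonempty ι] (hA : A.IsHermitian) :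
    ∃ v : ι → 𝕜, v ≠ 0 ∧ A *ᵥ v = (⨆ i, hA.eigenvalues i) • v := by
  obtain ⟨i, hi⟩ := exists_eq_ciSup_of_finite (f := hA.eigenvalues)
  refine ⟨hA.eigenvectorBasis i, fun h ↦ hA.eigenvectorBasis.orthonormal.ne_zero i ?_, ?_⟩
  · ext j
    exact congrFun h j
  · rw [← hi]
    exact hA.mulVec_eigenvectorBasis i

end Matrix.IsHermitian

section Indicator

variable {ι R : Type*} [Fintype ι] [NonUnitalNonAssocSemiring R]

lemma dotProduct_indicator_self (s : Set ι) (v : ι → R) :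
    v ⬝ᵥ s.indicator v = s.indicator v ⬝ᵥ s.indicator v := by
  classical
  refine Finset.sum_congr rfl fun i _ ↦ ?_
  by_cases hi : i ∈ s <;> simp [hi]

lemma indicator_dotProduct_mulVec_indicator_eq_zero {A : Matrix ι ι R} {s : Set ι}
    (hs : ∀ i ∈ s, ∀ j ∈ s, A i j = 0) (v : ι → R) :
    s.indicator v ⬝ᵥ (A *ᵥ s.indicator v) = 0 := by
  classical
  refine Finset.sum_eq_zero fun i _ ↦ ?_
  by_cases hi : i ∈ s
  · simp only [mulVec, dotProduct, Finset.mul_sum]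
    refine Finset.sum_eq_zero fun j _ ↦ ?_
    by_cases hj : j ∈ s <;> simp [hi, hj, hs i hi j]
  · simp [hi]

lemma sum_dotProduct_self_indicator_fiber {κ : Type*} [Fintype κ] (C : ι → κ) (v : ι → R) :
    ∑ c, {i | C i = c}.indicator v ⬝ᵥ {i | C i = c}.indicator v = v ⬝ᵥ v := by
  classical
  simp only [dotProduct, Set.indicator_apply]
  rw [Finset.sum_comm]
  simp

end Indicator

theorem Matrix.IsSymm.card_sub_one_mul_le_neg_of_blocks_eq_zero {ι κ : Type*} [Fintype ι]
    [Fintype κ] [Nonempty κ] {A : Matrix ι ι ℝ} (hA : A.IsSymm) (C : ι → κ)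
    (hC : ∀ i j, C i = C j → A i j = 0) {m : ℝ} (hm : ∀ x, m * (x ⬝ᵥ x) ≤ x ⬝ᵥ (A *ᵥ x))
    {μ : ℝ} {v : ι → ℝ} (hv0 : v ≠ 0) (hv : A *ᵥ v = μ • v) :
    ((Fintype.card κ : ℝ) - 1) * m ≤ -μ := by
  set k : ℝ := (Fintype.card κ : ℝ) with hk_def
  set N := v ⬝ᵥ v
  set y : κ → ι → ℝ := fun c ↦ {i | C i = c}.indicator v
  have hvy (c : κ) : v ⬝ᵥ y c = y c ⬝ᵥ y c := dotProduct_indicator_self _ v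
  have hyAy (c : κ) : y c ⬝ᵥ (A *ᵥ y c) = 0 :=
    indicator_dotProduct_mulVec_indicator_eq_zero (fun i hi j hj ↦ hC i j (hi.trans hj.symm)) v
  have hvAy (c : κ) : v ⬝ᵥ (A *ᵥ y c) = μ * (y c ⬝ᵥ y c) := by
    rw [dotProduct_mulVec, ← mulVec_transpose, hA.eq, hv, smul_dotProduct, hvy, smul_eq_mul]
  have hclass (c : κ) : m * (k ^ 2 * (y c ⬝ᵥ y c) - 2 * k * (y c ⬝ᵥ y c) + N) ≤
      μ * N - 2 * k * μ * (y c ⬝ᵥ y c) := by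
    have h := hm (k • y c - v)
    simp only [sub_dotProduct, dotProduct_sub, smul_dotProduct, dotProduct_smul, mulVec_sub,
      mulVec_smul, smul_eq_mul, hyAy, hvAy, hv, dotProduct_comm (y c) v, hvy] at h
    linear_combination h
  have hyy : ∑ c, y c ⬝ᵥ y c = N := sum_dotProduct_self_indicator_fiber C v
  have hsum := Finset.sum_le_sum fun c (_ : c ∈ Finset.univ) ↦ hclass c
  simp only [← Finset.mul_sum, Finset.sum_add_distrib, Finset.sum_sub_distrib, hyy,
    Finset.sum_const, Finset.card_univ, nsmul_eq_mul, ← hk_def] at hsum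
  have hN : 0 < N := lt_of_le_of_ne (Finset.sum_nonneg fun i _ ↦ mul_self_nonneg (v i))
    (Ne.symm (dotProduct_self_eq_zero.not.mpr hv0))
  have hk : 0 < k := Nat.cast_pos.mpr Fintype.card_pos
  have h : k * N * ((k - 1) * m) ≤ k * N * (-μ) := by linear_combination hsum
  exact le_of_mul_le_mul_left h (by positivity)

lemma SimpleGraph.Coloring.adjMatrix_eq_zero_of_eq {V α R : Type*} [Zero R] [One R]
    {G : SimpleGraph V} [DecidableRel G.Adj] (C : G.Coloring α) {i j : V} (h : C i = C j) :
    G.adjMatrix R i j = 0 := by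
  rw [SimpleGraph.adjMatrix_apply, if_neg fun hij ↦ C.valid hij h]

open Finset in
theorem hoffman_bound (n : ℕ) (G : SimpleGraph (Fin n)) [DecidableRel G.Adj]
    (hE : ∃ i j, G.Adj i j)
    (hA : (G.adjMatrix ℝ).IsHermitian) :
    (G.chromaticNumber.toNat : ℝ) ≥
      1 - (⨆ i, hA.eigenvalues i) / (⨅ i, hA.eigenvalues i) := by
  obtain ⟨a, b, hab⟩ := hE
  have : Nonempty (Fin n) := ⟨a⟩
  have hA0 : G.adjMatrix ℝ ≠ 0 := fun h ↦ by simpa [hab] using congrFun (congrFun h a) b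
  have hmin := hA.iInf_eigenvalues_neg (G.trace_adjMatrix ℝ) hA0
  obtain ⟨C⟩ := G.colorable_chromaticNumber_of_fintype
  have : Nonempty (Fin G.chromaticNumber.toNat) := ⟨C a⟩
  obtain ⟨v, hv0, hv⟩ := hA.exists_mulVec_eq_iSup_eigenvalues_smul
  have key := G.isSymm_adjMatrix.card_sub_one_mul_le_neg_of_blocks_eq_zero C
    (fun _ _ ↦ C.adjMatrix_eq_zero_of_eq) hA.iInf_eigenvalues_mul_dotProduct_self_le hv0 hv
  rw [Fintype.card_fin] at key
  rw [ge_iff_le, sub_le_comm, le_div_iff_of_neg hmin]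
  linarith
end

section
/- Let G be a graph with weighted adjacency matrix W (real symmetric, supported on edges), with largest eigenvalue λ_1 and least eigenvalue λ_n. Suppose V(G) is partitioned into k ≥ 2 clusters C_1,...,C_k such that for each t the largest eigenvalue of the principal submatrix W[C_t] is at most λ, where λ < λ_1. Then k ≥ (λ_1 − λ_n)/(λ − λ_n). -/
/-!
Let `x` be an eigenvector of `W` for `λ₁` and `x_t` its restriction to the cluster `C_t`, so that
`x ⬝ x_t = ‖x_t‖²` and `∑ₜ ‖x_t‖² = ‖x‖²`. The Rayleigh bound `λₙ ‖y‖² ≤ yᵀ W y` applied to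
`y = x - k x_t`, summed over `t`, has cross terms `-2k λ₁ ‖x‖²` and cluster terms
`k² ∑ₜ x_tᵀ W x_t ≤ k² λ ‖x‖²`; this leaves `k (k - 1) λₙ ≤ -k λ₁ + k² λ`, i.e.
`λ₁ - λₙ ≤ k (λ - λₙ)`.
-/

open Matrix
open scoped MatrixOrder

variable {ι : Type*} [Fintype ι]

lemma Fintype.sum_subtype_eq_sum_ite {M : Type*} [AddCommMonoid M] (p : ι → Prop)
    [DecidablePred p] (f : ι → M) : ∑ s : {i // p i}, f s = ∑ i, if p i then f i else 0 :=
  (Finset.sum_subtype _ (by simp) f).symm.trans (Finset.sum_filter _ _)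

namespace Matrix

variable {R : Type*} [NonUnitalNonAssocSemiring R]

lemma dotProduct_submatrix_mulVec_subtype (A : Matrix ι ι R) (p : ι → Prop) [DecidablePred p]
    (v : ι → R) :
    (fun s : {i // p i} => v s) ⬝ᵥ A.submatrix (↑) (↑) *ᵥ (fun s : {i // p i} => v s)
      = (fun i => if p i then v i else 0) ⬝ᵥ A *ᵥ (fun i => if p i then v i else 0) := by
  simp only [dotProduct, mulVec, submatrix_apply]
  rw [Fintype.sum_subtype_eq_sum_ite p fun i => v i * ∑ s : {i // p i}, A i s * v s]
  refine Finset.sum_congr rfl fun i _ => ?_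
  rw [Fintype.sum_subtype_eq_sum_ite p fun j => A i j * v j]
  split_ifs <;> simp [mul_ite]

lemma dotProduct_subtype (p : ι → Prop) [DecidablePred p] (v : ι → R) :
    (fun s : {i // p i} => v s) ⬝ᵥ (fun s : {i // p i} => v s)
      = (fun i => if p i then v i else 0) ⬝ᵥ (fun i => if p i then v i else 0) := by
  simp only [dotProduct]
  rw [Fintype.sum_subtype_eq_sum_ite p fun i => v i * v i]
  refine Finset.sum_congr rfl fun i _ => ?_
  split_ifs <;> simp

lemma dotProduct_ite_self (x : ι → R) (p : ι → Prop) [DecidablePred p] :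
    x ⬝ᵥ (fun i => if p i then x i else 0)
      = (fun i => if p i then x i else 0) ⬝ᵥ (fun i => if p i then x i else 0) := by
  simp only [dotProduct]
  refine Finset.sum_congr rfl fun i _ => ?_
  split_ifs <;> simp

lemma sum_dotProduct_ite_eq {τ : Type*} [Fintype τ] [DecidableEq τ] (x : ι → R) (φ : ι → τ) :
    ∑ t, (fun i => if φ i = t then x i else 0) ⬝ᵥ (fun i => if φ i = t then x i else 0)
      = x ⬝ᵥ x := by
  simp only [dotProduct, mul_ite, ite_mul, mul_zero]
  rw [Finset.sum_comm]
  simp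

end Matrix

namespace Matrix.IsHermitian

variable {A : Matrix ι ι ℝ}

lemma dotProduct_mulVec_le_of_eigenvalues_le [DecidableEq ι] (hA : A.IsHermitian) {c : ℝ}
    (h : ∀ i, hA.eigenvalues i ≤ c) (v : ι → ℝ) : v ⬝ᵥ A *ᵥ v ≤ c * (v ⬝ᵥ v) := by
  have hle : A ≤ algebraMap ℝ _ c := by
    rw [le_algebraMap_iff_spectrum_le hA.isSelfAdjoint, hA.spectrum_real_eq_range_eigenvalues]
    rintro _ ⟨i, rfl⟩
    exact h i
  have := (le_iff.mp hle).dotProduct_mulVec_nonneg v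
  rwa [star_trivial, sub_mulVec, dotProduct_sub, Algebra.algebraMap_eq_smul_one, smul_mulVec,
    one_mulVec, dotProduct_smul, smul_eq_mul, sub_nonneg] at this

lemma le_dotProduct_mulVec_of_le_eigenvalues [DecidableEq ι] (hA : A.IsHermitian) {c : ℝ}
    (h : ∀ i, c ≤ hA.eigenvalues i) (v : ι → ℝ) : c * (v ⬝ᵥ v) ≤ v ⬝ᵥ A *ᵥ v := by
  have hle : algebraMap ℝ _ c ≤ A := by
    rw [algebraMap_le_iff_le_spectrum hA.isSelfAdjoint, hA.spectrum_real_eq_range_eigenvalues]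
    rintro _ ⟨i, rfl⟩
    exact h i
  have := (le_iff.mp hle).dotProduct_mulVec_nonneg v
  rwa [star_trivial, sub_mulVec, dotProduct_sub, Algebra.algebraMap_eq_smul_one, smul_mulVec,
    one_mulVec, dotProduct_smul, smul_eq_mul, sub_nonneg] at this

lemma dotProduct_mulVec_ite_le [DecidableEq ι] (hA : A.IsHermitian) (p : ι → Prop)
    [DecidablePred p] {c : ℝ} (h : ∀ s, (hA.submatrix ((↑) : {i // p i} → ι)).eigenvalues s ≤ c)
    (v : ι → ℝ) :
    (fun i => if p i then v i else 0) ⬝ᵥ A *ᵥ (fun i => if p i then v i else 0)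
      ≤ c * ((fun i => if p i then v i else 0) ⬝ᵥ (fun i => if p i then v i else 0)) := by
  rw [← dotProduct_submatrix_mulVec_subtype, ← dotProduct_subtype]
  exact (hA.submatrix _).dotProduct_mulVec_le_of_eigenvalues_le h _

lemma dotProduct_mulVec_comm (hA : A.IsHermitian) (v w : ι → ℝ) :
    v ⬝ᵥ A *ᵥ w = w ⬝ᵥ A *ᵥ v := by
  rw [dotProduct_mulVec, ← mulVec_transpose, dotProduct_comm,
    ← conjTranspose_eq_transpose_of_trivial, hA.eq]

lemma dotProduct_mulVec_sub_smul (hA : A.IsHermitian) {x y : ι → ℝ} {Λ : ℝ}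
    (hAx : A *ᵥ x = Λ • x) (hxy : x ⬝ᵥ y = y ⬝ᵥ y) (s : ℝ) :
    (x - s • y) ⬝ᵥ A *ᵥ (x - s • y)
      = Λ * (x ⬝ᵥ x) - 2 * s * Λ * (y ⬝ᵥ y) + s ^ 2 * (y ⬝ᵥ A *ᵥ y) := by
  have hyx : y ⬝ᵥ x = y ⬝ᵥ y := by rw [dotProduct_comm, hxy]
  have hxAy : x ⬝ᵥ A *ᵥ y = Λ * (y ⬝ᵥ y) := by
    rw [hA.dotProduct_mulVec_comm, hAx, dotProduct_smul, smul_eq_mul, hyx]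
  rw [mulVec_sub, mulVec_smul]
  simp only [sub_dotProduct, dotProduct_sub, smul_dotProduct, dotProduct_smul, smul_eq_mul,
    hxAy, hAx, hyx]
  ring

theorem sub_le_card_mul_sub_of_partition {τ : Type*} [Fintype τ] [DecidableEq τ]
    (hA : A.IsHermitian) {μ Λ c : ℝ} (hμ : ∀ v, μ * (v ⬝ᵥ v) ≤ v ⬝ᵥ A *ᵥ v) {x : ι → ℝ}
    (hx : x ≠ 0) (hAx : A *ᵥ x = Λ • x) (φ : ι → τ)
    (hφ : ∀ t, (fun i => if φ i = t then x i else 0) ⬝ᵥ A *ᵥ (fun i => if φ i = t then x i else 0)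
      ≤ c * ((fun i => if φ i = t then x i else 0) ⬝ᵥ (fun i => if φ i = t then x i else 0))) :
    Λ - μ ≤ Fintype.card τ * (c - μ) := by
  set k : ℝ := (Fintype.card τ : ℝ)
  set y : τ → ι → ℝ := fun t i => if φ i = t then x i else 0 with hy
  have hk : 0 < k := by
    obtain ⟨i, -⟩ := Function.ne_iff.mp hx
    exact Nat.cast_pos.mpr (Fintype.card_pos_iff.mpr ⟨φ i⟩)
  have hN : 0 < x ⬝ᵥ x := by simpa using dotProduct_self_star_pos_iff.mpr hx
  have hper (t : τ) : μ * (x ⬝ᵥ x - 2 * k * (y t ⬝ᵥ y t) + k ^ 2 * (y t ⬝ᵥ y t))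
      ≤ Λ * (x ⬝ᵥ x) - 2 * k * Λ * (y t ⬝ᵥ y t) + k ^ 2 * (c * (y t ⬝ᵥ y t)) := by
    have hxy : x ⬝ᵥ y t = y t ⬝ᵥ y t := dotProduct_ite_self x (φ · = t)
    have hsq : (x - k • y t) ⬝ᵥ (x - k • y t)
        = x ⬝ᵥ x - 2 * k * (y t ⬝ᵥ y t) + k ^ 2 * (y t ⬝ᵥ y t) := by
      simp only [sub_dotProduct, dotProduct_sub, smul_dotProduct, dotProduct_smul, smul_eq_mul,
        dotProduct_comm (y t) x, hxy]
      ring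
    have hray := hμ (x - k • y t)
    rw [hsq, hA.dotProduct_mulVec_sub_smul hAx hxy] at hray
    linarith [mul_le_mul_of_nonneg_left (hφ t) (sq_nonneg k)]
  have hsum := Finset.sum_le_sum fun t (_ : t ∈ Finset.univ) => hper t
  simp only [Finset.sum_add_distrib, Finset.sum_sub_distrib, ← Finset.mul_sum, Finset.sum_const,
    Finset.card_univ, nsmul_eq_mul, hy, sum_dotProduct_ite_eq] at hsum
  have : k * (x ⬝ᵥ x) * ((Λ - μ) - k * (c - μ)) ≤ 0 := by linear_combination hsum
  exact sub_nonpos.mp (nonpos_of_mul_nonpos_right this (mul_pos hk hN))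

end Matrix.IsHermitian

open Finset in
theorem lambda_clustering_bound_general (n k : ℕ)
    (W : Matrix (Fin n) (Fin n) ℝ) (hW : W.IsHermitian)
    (lam : ℝ) (φ : Fin n → Fin k)
    (hlo : ⨅ i, hW.eigenvalues i < lam)
    (hclust : ∀ t : Fin k,
      ∀ h : (W.submatrix ((↑) : {i // φ i = t} → Fin n)
              ((↑) : {i // φ i = t} → Fin n)).IsHermitian,
        ∀ s, h.eigenvalues s ≤ lam) :
    (k : ℝ) ≥ ((⨆ i, hW.eigenvalues i) - ⨅ i, hW.eigenvalues i) /
      (lam - ⨅ i, hW.eigenvalues i) := by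
  rcases isEmpty_or_nonempty (Fin n) with hn | hn
  · simp [Real.iSup_of_isEmpty, Real.iInf_of_isEmpty]
  obtain ⟨i₀, hi₀⟩ : ∃ i, hW.eigenvalues i = ⨆ i, hW.eigenvalues i := exists_eq_ciSup_of_finite
  have hspread := hW.sub_le_card_mul_sub_of_partition
    (hW.le_dotProduct_mulVec_of_le_eigenvalues fun i => ciInf_le (Set.finite_range _).bddBelow i)
    (by simpa using hW.eigenvectorBasis.orthonormal.ne_zero i₀)
    (hi₀ ▸ hW.mulVec_eigenvectorBasis i₀) φ
    fun t => hW.dotProduct_mulVec_ite_le (φ · = t) (hclust t _) _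
  rw [Fintype.card_fin] at hspread
  rw [ge_iff_le, div_le_iff₀ (sub_pos.mpr hlo)]
  linarith

open Finset in
theorem lambda_clustering_bound (n k : ℕ) (hk : 2 ≤ k)
    (G : SimpleGraph (Fin n))
    (W : Matrix (Fin n) (Fin n) ℝ) (hW : W.IsHermitian)
    (hsupp : ∀ i j, ¬ G.Adj i j → W i j = 0)
    (lam : ℝ) (φ : Fin n → Fin k)
    (hlo : ⨅ i, hW.eigenvalues i < lam) (hhi : lam < ⨆ i, hW.eigenvalues i)
    (hclust : ∀ t : Fin k,
      ∀ h : (W.submatrix ((↑) : {i // φ i = t} → Fin n)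
              ((↑) : {i // φ i = t} → Fin n)).IsHermitian,
        ∀ s, h.eigenvalues s ≤ lam) :
    (k : ℝ) ≥ ((⨆ i, hW.eigenvalues i) - ⨅ i, hW.eigenvalues i) /
      (lam - ⨅ i, hW.eigenvalues i) :=
  lambda_clustering_bound_general n k W hW lam φ hlo hclust
end

section
/- Every graph G has a ((Δ(G)+1)/2)-vertex cover: the edge set E(G) can be written as ∪_{i∈V(G)} E_i with E_i ⊆ {e : i ∈ e} and |E_i| ≤ (Δ(G)+1)/2 for each vertex i. -/
/-!
Let every edge be covered by one of its endpoints, its tail, i.e. orient `G`. Among all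
orientations pick one minimising the total excess `∑ v, (outdeg v - k)⁺` with `k = ⌈Δ/2⌉`.
If some `v` had out-degree above `k`, reversing a directed path from `v` to a vertex of
out-degree below `k` would lower the excess, so every vertex reachable from `v` has out-degree
at least `k`. But the reachable set `R` is closed under out-arcs, so its out-degrees add up to
at most half its degree sum, hence to at most `k |R|`; this contradicts `outdeg v > k`.
-/

open Finset

namespace List

theorem exists_nodup_isChain_cons_of_relationReflTransGen {α : Type*} {r : α → α → Prop}
    {a b : α} (h : Relation.ReflTransGen r a b) :
    ∃ l, (a :: l).Nodup ∧ IsChain r (a :: l) ∧ getLast (a :: l) (cons_ne_nil _ _) = b := by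
  induction h using Relation.ReflTransGen.head_induction_on with
  | refl => exact ⟨[], nodup_singleton _, .singleton _, rfl⟩
  | @head a c hac _ ih =>
    obtain ⟨l, hnd, hch, hlast⟩ := ih
    by_cases ha : a ∈ c :: l
    · obtain ⟨p, q, hpq⟩ := append_of_mem ha
      rw [hpq] at hnd hch
      refine ⟨q, hnd.sublist (sublist_append_right _ _), hch.right_of_append, ?_⟩
      rw [← hlast, getLast_congr _ (hpq ▸ cons_ne_nil _ _) hpq,
        getLast_append_of_ne_nil _ (cons_ne_nil _ _)]
    · exact ⟨c :: l, nodup_cons.mpr ⟨ha, hnd⟩, hch.cons_cons hac,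
        by rwa [getLast_cons_cons]⟩

end List

namespace SimpleGraph

variable {V : Type*} (G : SimpleGraph V)

/-- An orientation is encoded by the choice of a tail `σ e ∈ e` for every edge `e`. -/
def IsOrientation (σ : Sym2 V → V) : Prop := ∀ e ∈ G.edgeSet, σ e ∈ e

def Arc (σ : Sym2 V → V) (x y : V) : Prop := G.Adj x y ∧ σ s(x, y) = x

variable {G}

lemma IsOrientation.arc_of_mem {σ : Sym2 V → V} (hσ : G.IsOrientation σ) {e : Sym2 V}
    (he : e ∈ G.edgeSet) {x : V} (hx : x ∈ e) (hne : x ≠ σ e) : G.Arc σ (σ e) x := by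
  have hex : e = s(σ e, x) := (Sym2.mem_and_mem_iff hne.symm).mp ⟨hσ e he, hx⟩
  refine ⟨?_, ?_⟩
  · rwa [← mem_edgeSet, ← hex]
  · rw [← hex]

variable [DecidableEq V]

lemma IsOrientation.update_mk {σ : Sym2 V → V} (hσ : G.IsOrientation σ) (x y : V) :
    G.IsOrientation (Function.update σ s(x, y) y) := by
  intro e he
  rcases eq_or_ne e s(x, y) with rfl | hne
  · simp
  · simpa [hne] using hσ e he

lemma Arc.update_mk_of_ne {σ : Sym2 V → V} {a b x y : V} (h : G.Arc σ a b) (ha : a ≠ x)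
    (hb : b ≠ x) : G.Arc (Function.update σ s(x, y) y) a b := by
  have hne : s(a, b) ≠ s(x, y) := fun heq => by
    have := heq ▸ Sym2.mem_mk_left x y
    simp_all
  exact ⟨h.1, by rw [Function.update_of_ne hne, h.2]⟩

variable (G) [Fintype V] [DecidableRel G.Adj]

def outEdges (σ : Sym2 V → V) (v : V) : Finset (Sym2 V) := {e ∈ G.edgeFinset | σ e = v}

def outDeg (σ : Sym2 V → V) (v : V) : ℕ := #(G.outEdges σ v)

def excess (k : ℕ) (σ : Sym2 V → V) : ℕ := ∑ v, (G.outDeg σ v - k)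

variable {G}

@[simp]
lemma mem_outEdges {σ : Sym2 V → V} {v : V} {e : Sym2 V} :
    e ∈ G.outEdges σ v ↔ e ∈ G.edgeSet ∧ σ e = v := by
  simp [outEdges]

lemma outEdges_update_mk {σ : Sym2 V → V} {x y : V} (h : G.Arc σ x y) (z : V) :
    G.outEdges (Function.update σ s(x, y) y) z =
      if z = y then insert s(x, y) (G.outEdges σ z) else (G.outEdges σ z).erase s(x, y) := by
  ext e
  rcases eq_or_ne e s(x, y) with rfl | hne
  · split_ifs with hz
    · simp [outEdges, h.1, hz]
    · simp [outEdges, h.1, Ne.symm hz]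
  · split_ifs <;> simp [outEdges, *]

lemma outDeg_update_mk {σ : Sym2 V → V} {x y : V} (h : G.Arc σ x y) (z : V) :
    G.outDeg (Function.update σ s(x, y) y) z + (if z = x then 1 else 0) =
      G.outDeg σ z + (if z = y then 1 else 0) := by
  have hxy : x ≠ y := h.1.ne
  have hmem : s(x, y) ∈ G.outEdges σ z ↔ z = x := by
    simp [outEdges, h.1, h.2, eq_comm]
  rw [outDeg, outDeg, outEdges_update_mk h]
  split_ifs with hzy hzx hzx
  · exact absurd (hzx.symm.trans hzy) hxy
  · rw [card_insert_of_notMem (by rwa [hmem])]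
  · rw [card_erase_add_one (hmem.mpr hzx), add_zero]
  · rw [erase_eq_of_notMem (by rwa [hmem])]

lemma exists_outDeg_reverse_of_isChain {σ : Sym2 V → V} (hσ : G.IsOrientation σ) {v : V}
    {l : List V} (hnd : (v :: l).Nodup) (hch : (v :: l).IsChain (G.Arc σ)) :
    ∃ τ, G.IsOrientation τ ∧ ∀ z, G.outDeg τ z + (if z = v then 1 else 0) =
      G.outDeg σ z + (if z = (v :: l).getLast (List.cons_ne_nil _ _) then 1 else 0) := by
  induction l generalizing σ v with
  | nil => exact ⟨σ, hσ, fun z => rfl⟩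
  | cons u l ih =>
    -- Flip the first arc `v → u`; since `v` does not recur, the rest of the path survives.
    obtain ⟨hvu, hch⟩ := List.isChain_cons_cons.mp hch
    have hv : v ∉ u :: l := (List.nodup_cons.mp hnd).1
    have hch' : (u :: l).IsChain (G.Arc (Function.update σ s(v, u) u)) :=
      hch.imp_of_mem_imp fun a b ha hb hab =>
        hab.update_mk_of_ne (fun h => hv (h ▸ ha)) (fun h => hv (h ▸ hb))
    obtain ⟨τ, hτ, hdeg⟩ := ih (hσ.update_mk v u) (List.nodup_cons.mp hnd).2 hch'
    refine ⟨τ, hτ, fun z => ?_⟩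
    have hrest := hdeg z
    have hflip := outDeg_update_mk hvu z
    rw [List.getLast_cons_cons]
    split_ifs at hrest hflip ⊢ <;> omega

lemma exists_outDeg_reverse {σ : Sym2 V → V} (hσ : G.IsOrientation σ) {v w : V}
    (h : Relation.ReflTransGen (G.Arc σ) v w) :
    ∃ τ, G.IsOrientation τ ∧ ∀ z, G.outDeg τ z + (if z = v then 1 else 0) =
      G.outDeg σ z + (if z = w then 1 else 0) := by
  obtain ⟨l, hnd, hch, rfl⟩ := List.exists_nodup_isChain_cons_of_relationReflTransGen h
  exact exists_outDeg_reverse_of_isChain hσ hnd hch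

lemma le_outDeg_of_reflTransGen {k : ℕ} {σ : Sym2 V → V} (hσ : G.IsOrientation σ)
    (hmin : ∀ τ, G.IsOrientation τ → G.excess k σ ≤ G.excess k τ) {v w : V}
    (hv : k < G.outDeg σ v) (h : Relation.ReflTransGen (G.Arc σ) v w) : k ≤ G.outDeg σ w := by
  by_contra! hw
  obtain ⟨τ, hτ, hdeg⟩ := exists_outDeg_reverse hσ h
  have : G.excess k τ + 1 ≤ G.excess k σ :=
    calc G.excess k τ + 1 = ∑ z, ((G.outDeg τ z - k) + if z = v then 1 else 0) := by
          rw [sum_add_distrib, sum_ite_eq' univ v, if_pos (mem_univ v), excess]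
      _ ≤ ∑ z, (G.outDeg σ z - k) := sum_le_sum fun z _ => by
          have hz := hdeg z
          split_ifs at hz ⊢ <;> subst_vars <;> omega
  have := hmin τ hτ
  omega

lemma two_mul_sum_outDeg_le_sum_degree (σ : Sym2 V → V) {S : Finset V}
    (hS : ∀ e ∈ G.edgeSet, σ e ∈ S → ∀ x ∈ e, x ∈ S) :
    2 * ∑ z ∈ S, G.outDeg σ z ≤ ∑ z ∈ S, G.degree z := by
  set E := {e ∈ G.edgeFinset | σ e ∈ S}
  have hout : ∑ z ∈ S, G.outDeg σ z = #E := by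
    rw [card_eq_sum_card_fiberwise (s := E) (t := S) (f := σ)
      fun e he => (mem_filter.mp (mem_coe.mp he)).2]
    refine sum_congr rfl fun z hz => congrArg card ?_
    ext e
    simp only [mem_outEdges, E, mem_filter, mem_edgeFinset]
    exact ⟨fun ⟨he, hez⟩ => ⟨⟨he, hez ▸ hz⟩, hez⟩,
      fun ⟨⟨he, _⟩, hez⟩ => ⟨he, hez⟩⟩
  have hends : ∀ e ∈ E, #(S.bipartiteBelow (· ∈ ·) e) = 2 := by
    intro e he
    obtain ⟨he, heS⟩ := mem_filter.mp he
    rw [mem_edgeFinset] at he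
    have : S.bipartiteBelow (· ∈ ·) e = e.toFinset := by
      ext x
      simp only [mem_bipartiteBelow, Sym2.mem_toFinset, and_iff_right_iff_imp]
      exact hS e he heS x
    rw [this, Sym2.card_toFinset_of_not_isDiag e (G.not_isDiag_of_mem_edgeSet he)]
  have hinc : ∀ z ∈ S, #(E.bipartiteAbove (· ∈ ·) z) ≤ G.degree z := fun z _ => by
    rw [← card_incidenceFinset_eq_degree, incidenceFinset_eq_filter]
    exact card_le_card (filter_subset_filter _ (filter_subset _ _))
  calc 2 * ∑ z ∈ S, G.outDeg σ z = ∑ e ∈ E, #(S.bipartiteBelow (· ∈ ·) e) := by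
        rw [sum_congr rfl hends, hout, sum_const, smul_eq_mul, mul_comm]
    _ = ∑ z ∈ S, #(E.bipartiteAbove (· ∈ ·) z) :=
        (sum_card_bipartiteAbove_eq_sum_card_bipartiteBelow _).symm
    _ ≤ ∑ z ∈ S, G.degree z := sum_le_sum hinc

theorem exists_orientation_outDeg_le (k : ℕ) (hk : ∀ v, G.degree v ≤ 2 * k) :
    ∃ σ, G.IsOrientation σ ∧ ∀ v, G.outDeg σ v ≤ k := by
  classical
  have hσ₀ : G.IsOrientation fun e => e.out.1 := fun e _ => Sym2.out_fst_mem e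
  obtain ⟨σ, hσ, hmin⟩ :=
    Set.exists_min_image {σ | G.IsOrientation σ} (G.excess k) (Set.toFinite _) ⟨_, hσ₀⟩
  refine ⟨σ, hσ, fun v => ?_⟩
  by_contra! hv
  set S : Finset V := {w | Relation.ReflTransGen (G.Arc σ) v w}
  have hclosed : ∀ e ∈ G.edgeSet, σ e ∈ S → ∀ x ∈ e, x ∈ S := by
    intro e he heS x hx
    rcases eq_or_ne x (σ e) with rfl | hne
    · exact heS
    · simp only [S, mem_filter, mem_univ, true_and] at heS ⊢
      exact heS.tail (hσ.arc_of_mem he hx hne)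
  have hlt : ∑ _z ∈ S, k < ∑ z ∈ S, G.outDeg σ z :=
    sum_lt_sum (fun w hw => le_outDeg_of_reflTransGen hσ hmin hv (mem_filter.mp hw).2)
      ⟨v, mem_filter.mpr ⟨mem_univ v, .refl⟩, hv⟩
  have hdeg : ∑ z ∈ S, G.degree z ≤ 2 * ∑ _z ∈ S, k := by
    rw [mul_sum]
    exact sum_le_sum fun z _ => hk z
  have := two_mul_sum_outDeg_le_sum_degree σ hclosed
  omega

end SimpleGraph

open Finset in
theorem max_degree_vertex_cover (n : ℕ) (G : SimpleGraph (Fin n))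
    [DecidableRel G.Adj] :
    ∃ F : Fin n → Finset (Sym2 (Fin n)),
      (∀ v, ∀ e ∈ F v, e ∈ G.edgeSet ∧ v ∈ e) ∧
      (∀ v, ((F v).card : ℝ) ≤ ((G.maxDegree : ℝ) + 1) / 2) ∧
      (∀ e ∈ G.edgeSet, ∃ v, e ∈ F v) := by
  obtain ⟨σ, hσ, hout⟩ := G.exists_orientation_outDeg_le ((G.maxDegree + 1) / 2)
    fun v => by have := G.degree_le_maxDegree v; omega
  refine ⟨G.outEdges σ, fun v e he => ?_, fun v => ?_,
    fun e he => ⟨σ e, SimpleGraph.mem_outEdges.mpr ⟨he, rfl⟩⟩⟩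
  · obtain ⟨hE, rfl⟩ := SimpleGraph.mem_outEdges.mp he
    exact ⟨hE, hσ e hE⟩
  · have : 2 * G.outDeg σ v ≤ G.maxDegree + 1 := by have := hout v; omega
    rw [le_div_iff₀ two_pos]
    exact_mod_cast (mul_comm _ _).trans_le this
end

section
/- Let G be a d-regular graph with at least one edge, adjacency matrix A, and least eigenvalue λ_n. Then χ(G) ≥ (d − λ_n)/(−λ_n) = 1 − d/λ_n. -/
/-!
Color the graph with `k` colors and let `e_s` be the indicator vector of the color class `V_s`,
so that `∑ s, e_s = 𝟙`. As `A - λ_n I` is positive semidefinite, the quadratic form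
`Q(v) = vᵀ(A - λ_n I)v` satisfies `0 ≤ ∑ s, Q(𝟙 - k e_s) = k² ∑ s, Q(e_s) - k Q(𝟙)`. Color classes
are independent, so `Q(e_s) = -λ_n |V_s|`, and regularity gives `Q(𝟙) = (d - λ_n) n`; the
inequality becomes `d + λ_n (k - 1) ≤ 0`. An edge `ij` forces `λ_n ≤ -1`, as
`Q(e_i - e_j) = -2 - 2λ_n`.
-/

open scoped Matrix MatrixOrder ComplexOrder
open Finset

theorem Matrix.IsHermitian.posSemidef_sub_smul_one_iff {n 𝕜 : Type*} [Fintype n] [DecidableEq n]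
    [RCLike 𝕜] {A : Matrix n n 𝕜} (hA : A.IsHermitian) {c : ℝ} :
    (A - c • 1).PosSemidef ↔ ∀ i, c ≤ hA.eigenvalues i := by
  rw [← Algebra.algebraMap_eq_smul_one, ← Matrix.le_iff,
    algebraMap_le_iff_le_spectrum hA.isSelfAdjoint, hA.spectrum_real_eq_range_eigenvalues,
    Set.forall_mem_range]

theorem Matrix.sum_dotProduct_mulVec_sum_sub_card_smul {ι n R : Type*} [Fintype ι] [Fintype n]
    [CommRing R] (M : Matrix n n R) (e : ι → n → R) :
    ∑ s, (∑ t, e t - (Fintype.card ι : R) • e s) ⬝ᵥ M *ᵥ (∑ t, e t - (Fintype.card ι : R) • e s) =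
      (Fintype.card ι : R) ^ 2 * ∑ s, e s ⬝ᵥ M *ᵥ e s -
        Fintype.card ι * ((∑ t, e t) ⬝ᵥ M *ᵥ ∑ t, e t) := by
  simp only [mulVec_sub, mulVec_smul, sub_dotProduct, dotProduct_sub, smul_dotProduct,
    dotProduct_smul, smul_eq_mul, sum_sub_distrib, ← mul_sum, sum_const, card_univ, nsmul_eq_mul,
    ← dotProduct_sum, ← sum_dotProduct, ← mulVec_sum]
  ring

namespace SimpleGraph

variable {V α : Type*} {G : SimpleGraph V}

namespace Coloring

variable [DecidableEq α] (C : G.Coloring α) (R : Type*) [Semiring R]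

def classIndicator (s : α) : V → R := fun v => if C v = s then 1 else 0

theorem sum_classIndicator [Fintype α] : ∑ s, C.classIndicator R s = 1 := by
  ext v
  simp [classIndicator]

variable [Fintype V]

theorem classIndicator_dotProduct_adjMatrix_mulVec [DecidableRel G.Adj] (s : α) :
    C.classIndicator R s ⬝ᵥ G.adjMatrix R *ᵥ C.classIndicator R s = 0 := by
  rw [dotProduct_mulVec_adjMatrix]
  refine sum_eq_zero fun u _ => sum_eq_zero fun w _ => ite_eq_right_iff.mpr fun hadj => ?_
  have : C u ≠ s ∨ C w ≠ s := by
    by_contra! h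
    exact C.valid hadj (h.1.trans h.2.symm)
  rcases this with h | h <;> simp [classIndicator, h]

theorem sum_classIndicator_dotProduct_self [Fintype α] :
    ∑ s, C.classIndicator R s ⬝ᵥ C.classIndicator R s = Fintype.card V := by
  simp [dotProduct, classIndicator, sum_comm (γ := α)]

end Coloring

variable [Fintype V] [DecidableRel G.Adj]

theorem IsRegularOfDegree.one_dotProduct_adjMatrix_mulVec_one {R : Type*} [Semiring R] {d : ℕ}
    (hreg : G.IsRegularOfDegree d) : 1 ⬝ᵥ G.adjMatrix R *ᵥ 1 = Fintype.card V * d := by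
  simp [one_dotProduct, hreg.degree_eq]

variable [DecidableEq V]

theorem Adj.le_neg_one_of_posSemidef {i j : V} (hij : G.Adj i j) {c : ℝ}
    (hc : (G.adjMatrix ℝ - c • 1).PosSemidef) : c ≤ -1 := by
  have h := hc.dotProduct_mulVec_nonneg (Pi.single i 1 - Pi.single j 1)
  simp [Matrix.mulVec_sub, sub_dotProduct, dotProduct_sub, hij, hij.symm, hij.ne, hij.ne.symm] at h
  linarith

theorem Coloring.degree_add_mul_card_sub_one_nonpos [Nonempty V] [Fintype α] [DecidableEq α]
    {d : ℕ} (hreg : G.IsRegularOfDegree d) (C : G.Coloring α) {c : ℝ}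
    (hc : (G.adjMatrix ℝ - c • 1).PosSemidef) : d + c * (Fintype.card α - 1) ≤ 0 := by
  have hQ (v : V → ℝ) : 0 ≤ v ⬝ᵥ (G.adjMatrix ℝ - c • 1) *ᵥ v := by
    simpa using hc.dotProduct_mulVec_nonneg v
  have h := (sum_nonneg fun s _ => hQ _).trans_eq
    ((G.adjMatrix ℝ - c • 1).sum_dotProduct_mulVec_sum_sub_card_smul (C.classIndicator ℝ))
  simp only [C.sum_classIndicator, Matrix.sub_mulVec, Matrix.smul_mulVec, Matrix.one_mulVec,
    dotProduct_sub, dotProduct_smul, smul_eq_mul, sum_sub_distrib, ← mul_sum,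
    C.classIndicator_dotProduct_adjMatrix_mulVec, C.sum_classIndicator_dotProduct_self,
    hreg.one_dotProduct_adjMatrix_mulVec_one, one_dotProduct_one, sum_const_zero] at h
  have hk : (0 : ℝ) < Fintype.card α :=
    Nat.cast_pos.mpr (Fintype.card_pos_iff.mpr ⟨C (Classical.arbitrary V)⟩)
  have hn : (0 : ℝ) < Fintype.card V := by exact_mod_cast Fintype.card_pos
  have h' : 0 ≤ (Fintype.card α * Fintype.card V : ℝ) * -(d + c * (Fintype.card α - 1)) := by
    linarith
  exact neg_nonneg.mp (nonneg_of_mul_nonneg_right h' (mul_pos hk hn))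

end SimpleGraph

open Finset in
theorem hoffman_bound_regular (n d : ℕ) (G : SimpleGraph (Fin n))
    [DecidableRel G.Adj] (hreg : G.IsRegularOfDegree d)
    (hE : ∃ i j, G.Adj i j)
    (hA : (G.adjMatrix ℝ).IsHermitian) :
    (G.chromaticNumber.toNat : ℝ) ≥
      ((d : ℝ) - ⨅ i, hA.eigenvalues i) / (-(⨅ i, hA.eigenvalues i)) := by
  obtain ⟨i, j, hij⟩ := hE
  set c := ⨅ i, hA.eigenvalues i
  have hc : (G.adjMatrix ℝ - c • 1).PosSemidef :=
    hA.posSemidef_sub_smul_one_iff.mpr fun i => ciInf_le (Set.finite_range _).bddBelow i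
  have hc_neg : c ≤ -1 := hij.le_neg_one_of_posSemidef hc
  have : Nonempty (Fin n) := ⟨i⟩
  obtain ⟨C⟩ := G.colorable_chromaticNumber_of_fintype
  have hbound := C.degree_add_mul_card_sub_one_nonpos hreg hc
  rw [Fintype.card_fin] at hbound
  rw [ge_iff_le, div_le_iff₀ (by linarith)]
  linarith
end

section
/- Let G be a graph with at least one edge and adjacency matrix A with least eigenvalue λ_n. If unit vectors u_1,...,u_n ∈ ℝ^n satisfy ⟨u_i,u_j⟩ ≤ −1/(k−1) for every edge (i,j) of G (for some real k > 1), and α is an eigenvector of A for its largest eigenvalue λ_1, then λ_n ≤ −λ_1/(k−1). -/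
/-!
Put `vᵢ = |αᵢ| uᵢ`. Applying the Rayleigh bound `λₙ ‖x‖² ≤ xᵀAx` to each coordinate vector
`(vᵢ l)ᵢ` and summing gives `λₙ ‖α‖² ≤ ∑ᵢⱼ Aᵢⱼ ⟨vᵢ, vⱼ⟩`. Every nonzero term is an edge term with
`⟨uᵢ, uⱼ⟩ ≤ -1/(k-1)`, so the sum is at most `-1/(k-1) · |α|ᵀA|α|`, and since `A ≥ 0` entrywise,
`|α|ᵀA|α| ≥ αᵀAα = λ₁ ‖α‖²`.
-/

open Matrix Finset
open scoped MatrixOrder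

section

variable {n m : Type*} [Fintype n] [Fintype m]

theorem Matrix.IsHermitian.iInf_eigenvalues_mul_dotProduct_self_le_s18
    [DecidableEq n] [Nonempty n] {A : Matrix n n ℝ} (hA : A.IsHermitian) (x : n → ℝ) :
    (⨅ i, hA.eigenvalues i) * (x ⬝ᵥ x) ≤ x ⬝ᵥ A *ᵥ x := by
  have hle : algebraMap ℝ (Matrix n n ℝ) (⨅ i, hA.eigenvalues i) ≤ A := by
    rw [algebraMap_le_iff_le_spectrum hA.isSelfAdjoint, hA.spectrum_real_eq_range_eigenvalues]
    rintro _ ⟨i, rfl⟩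
    exact ciInf_le (Finite.bddBelow_range _) i
  simpa [sub_mulVec, Algebra.algebraMap_eq_smul_one, smul_mulVec, dotProduct_smul, sub_nonneg]
    using (le_iff.mp hle).dotProduct_mulVec_nonneg x

theorem Matrix.IsHermitian.iInf_eigenvalues_mul_sum_dotProduct_self_le
    [DecidableEq n] [Nonempty n] {A : Matrix n n ℝ} (hA : A.IsHermitian) (v : n → m → ℝ) :
    (⨅ i, hA.eigenvalues i) * ∑ i, v i ⬝ᵥ v i ≤ ∑ i, ∑ j, A i j * (v i ⬝ᵥ v j) := by
  calc (⨅ i, hA.eigenvalues i) * ∑ i, v i ⬝ᵥ v i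
      = ∑ l, (⨅ i, hA.eigenvalues i) * ((fun i ↦ v i l) ⬝ᵥ fun i ↦ v i l) := by
        simp only [dotProduct, mul_sum]
        exact sum_comm
    _ ≤ ∑ l, (fun i ↦ v i l) ⬝ᵥ A *ᵥ fun i ↦ v i l :=
        sum_le_sum fun l _ ↦ hA.iInf_eigenvalues_mul_dotProduct_self_le_s18 _
    _ = ∑ i, ∑ j, A i j * (v i ⬝ᵥ v j) := by
        simp only [dotProduct, mulVec, mul_sum]
        rw [sum_comm]
        refine sum_congr rfl fun i _ ↦ ?_
        rw [sum_comm]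
        exact sum_congr rfl fun j _ ↦ sum_congr rfl fun l _ ↦ by ring

theorem Matrix.dotProduct_mulVec_le_abs {A : Matrix n n ℝ} (hA : ∀ i j, 0 ≤ A i j) (x : n → ℝ) :
    x ⬝ᵥ A *ᵥ x ≤ |x| ⬝ᵥ A *ᵥ |x| := by
  simp only [dot_mulVec_eq_sum_sum, Pi.abs_apply]
  refine sum_le_sum fun j _ ↦ sum_le_sum fun i _ ↦ ?_
  calc x i * A i j * x j = A i j * (x i * x j) := by ring
    _ ≤ A i j * (|x i| * |x j|) :=
        mul_le_mul_of_nonneg_left ((le_abs_self _).trans (abs_mul _ _).le) (hA i j)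
    _ = |x i| * A i j * |x j| := by ring

theorem SimpleGraph.sum_adjMatrix_mul_dotProduct_smul_le {V : Type*} [Fintype V]
    (G : SimpleGraph V) [DecidableRel G.Adj] {x : V → ℝ} (hx : 0 ≤ x) {u : V → m → ℝ} {c : ℝ}
    (hu : ∀ i j, G.Adj i j → u i ⬝ᵥ u j ≤ c) :
    ∑ i, ∑ j, G.adjMatrix ℝ i j * ((x i • u i) ⬝ᵥ (x j • u j)) ≤
      c * (x ⬝ᵥ G.adjMatrix ℝ *ᵥ x) := by
  rw [dotProduct_mulVec_adjMatrix, mul_sum]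
  refine sum_le_sum fun i _ ↦ ?_
  rw [mul_sum]
  refine sum_le_sum fun j _ ↦ ?_
  by_cases h : G.Adj i j
  · simp only [adjMatrix_apply, h, if_true, one_mul, smul_dotProduct, dotProduct_smul, smul_eq_mul]
    rw [show x j * (x i * (u i ⬝ᵥ u j)) = x i * x j * (u i ⬝ᵥ u j) by ring, mul_comm c]
    exact mul_le_mul_of_nonneg_left (hu i j h) (mul_nonneg (hx i) (hx j))
  · simp [h]

end

open Finset in
theorem vector_coloring_eigenvector_inequality_general (n : ℕ) (G : SimpleGraph (Fin n))
    [DecidableRel G.Adj]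
    (hA : (G.adjMatrix ℝ).IsHermitian)
    (k : ℝ) (hk : 1 < k) (u : Fin n → (Fin n → ℝ))
    (hu : ∀ i, ∑ l, (u i l) ^ 2 = 1)
    (hedge : ∀ i j, G.Adj i j → ∑ l, u i l * u j l ≤ -1 / (k - 1))
    (α : Fin n → ℝ) (hα : α ≠ 0)
    (heig : (G.adjMatrix ℝ).mulVec α = (⨆ i, hA.eigenvalues i) • α) :
    (⨅ i, hA.eigenvalues i) ≤ -(⨆ i, hA.eigenvalues i) / (k - 1) := by
  obtain ⟨i₀, -⟩ := Function.ne_iff.mp hα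
  have : Nonempty (Fin n) := ⟨i₀⟩
  have hα_pos : 0 < α ⬝ᵥ α := by simpa using dotProduct_star_self_pos_iff.mpr hα
  have hc : -1 / (k - 1) ≤ 0 := div_nonpos_of_nonpos_of_nonneg (by norm_num) (by linarith)
  have hnorm : ∑ i, (|α i| • u i) ⬝ᵥ (|α i| • u i) = α ⬝ᵥ α := by
    refine sum_congr rfl fun i _ ↦ ?_
    have hui : u i ⬝ᵥ u i = 1 := by simpa only [dotProduct, sq] using hu i
    rw [smul_dotProduct, dotProduct_smul, hui, smul_eq_mul, smul_eq_mul, mul_one, abs_mul_abs_self]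
  refine le_of_mul_le_mul_right ?_ hα_pos
  calc (⨅ i, hA.eigenvalues i) * (α ⬝ᵥ α)
      ≤ ∑ i, ∑ j, G.adjMatrix ℝ i j * ((|α i| • u i) ⬝ᵥ (|α j| • u j)) :=
        hnorm ▸ hA.iInf_eigenvalues_mul_sum_dotProduct_self_le _
    _ ≤ -1 / (k - 1) * (|α| ⬝ᵥ G.adjMatrix ℝ *ᵥ |α|) :=
        G.sum_adjMatrix_mul_dotProduct_smul_le (abs_nonneg α) hedge
    _ ≤ -1 / (k - 1) * (α ⬝ᵥ G.adjMatrix ℝ *ᵥ α) :=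
        mul_le_mul_of_nonpos_left
          (dotProduct_mulVec_le_abs (fun _ _ ↦ ite_nonneg zero_le_one le_rfl) α) hc
    _ = -(⨆ i, hA.eigenvalues i) / (k - 1) * (α ⬝ᵥ α) := by
        rw [heig, dotProduct_smul, smul_eq_mul]; ring

open Finset in
theorem vector_coloring_eigenvector_inequality (n : ℕ) (G : SimpleGraph (Fin n))
    [DecidableRel G.Adj] (hE : ∃ i j, G.Adj i j)
    (hA : (G.adjMatrix ℝ).IsHermitian)
    (k : ℝ) (hk : 1 < k) (u : Fin n → (Fin n → ℝ))
    (hu : ∀ i, ∑ l, (u i l) ^ 2 = 1)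
    (hedge : ∀ i j, G.Adj i j → ∑ l, u i l * u j l ≤ -1 / (k - 1))
    (α : Fin n → ℝ) (hα : α ≠ 0)
    (heig : (G.adjMatrix ℝ).mulVec α = (⨆ i, hA.eigenvalues i) • α) :
    (⨅ i, hA.eigenvalues i) ≤ -(⨆ i, hA.eigenvalues i) / (k - 1) :=
  vector_coloring_eigenvector_inequality_general n G hA k hk u hu hedge α hα heig
end
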